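/- A topological space X is normal if and only if, in the category TopCat of topological spaces, the unique morphism from the empty space to X has the left lifting property (CategoryTheory.HasLiftingProperty) against the morphism π : I₀¹ → V. -/

import Mathlib

open unitInterval

/-- The interval with doubled endpoints: `[0,1]` together with extra points
`0' = Sum.inr false` and `1' = Sum.inr true`, with `0 ⤳ 0'` and `1 ⤳ 1'`. -/
def I01 : Type := unitInterval ⊕ Bool

instance : TopologicalSpace I01 where
  IsOpen U := IsOpen (Sum.inl ⁻¹' U : Set unitInterval) ∧
    (Sum.inr false ∈ U → Sum.inl (0 : unitInterval) ∈ U) ∧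
    (Sum.inr true ∈ U → Sum.inl (1 : unitInterval) ∈ U)
  isOpen_univ := ⟨isOpen_univ, fun _ => trivial, fun _ => trivial⟩
  isOpen_inter U V hU hV := ⟨hU.1.inter hV.1,
    fun h => ⟨hU.2.1 h.1, hV.2.1 h.2⟩, fun h => ⟨hU.2.2 h.1, hV.2.2 h.2⟩⟩
  isOpen_sUnion S hS := by
    refine ⟨?_, ?_, ?_⟩
    · have hpre : (Sum.inl ⁻¹' ⋃₀ S : Set unitInterval) =
          ⋃ U ∈ S, (Sum.inl ⁻¹' U : Set unitInterval) :=
        Set.ext fun x => ⟨fun ⟨U, hU, h⟩ => Set.mem_biUnion hU h, fun h => by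
          obtain ⟨U, hU, h⟩ := Set.mem_iUnion₂.mp h
          exact ⟨U, hU, h⟩⟩
      exact hpre ▸ isOpen_biUnion fun U hU => (hS U hU).1
    · rintro ⟨U, hU, hmem⟩
      exact ⟨U, hU, (hS U hU).2.1 hmem⟩
    · rintro ⟨U, hU, hmem⟩
      exact ⟨U, hU, (hS U hU).2.2 hmem⟩

/-- The three-point space with an open point `c` and two closed points `L`, `R`. -/
inductive V : Type
  | L | c | R

instance : TopologicalSpace V where
  IsOpen U := (V.L ∈ U → V.c ∈ U) ∧ (V.R ∈ U → V.c ∈ U)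
  isOpen_univ := ⟨fun _ => trivial, fun _ => trivial⟩
  isOpen_inter U W hU hW := ⟨fun h => ⟨hU.1 h.1, hW.1 h.2⟩, fun h => ⟨hU.2 h.1, hW.2 h.2⟩⟩
  isOpen_sUnion S hS := by
    constructor
    · rintro ⟨U, hU, hmem⟩
      exact ⟨U, hU, (hS U hU).1 hmem⟩
    · rintro ⟨U, hU, hmem⟩
      exact ⟨U, hU, (hS U hU).2 hmem⟩

/-- The map `π : I₀¹ → V` collapsing `[0,1]` to the open point `c`. -/
def pi1 : I01 → V
  | Sum.inl _ => V.c
  | Sum.inr false => V.L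
  | Sum.inr true => V.R

/-- The map `ι : I₀¹ → [0,1]` collapsing the doubled endpoints. -/
def iota : I01 → unitInterval
  | Sum.inl x => x
  | Sum.inr false => 0
  | Sum.inr true => 1


theorem pi1_continuous : Continuous pi1 := by
  rw [continuous_def]
  intro U hU
  refine ⟨?_, fun h => hU.1 h, fun h => hU.2 h⟩
  by_cases hc : V.c ∈ U
  · convert isOpen_univ using 1
    ext x
    exact iff_of_true hc trivial
  · convert isOpen_empty using 1
    ext x
    exact iff_of_false hc id

/-- `π : I₀¹ → V` as a morphism of `TopCat`. -/
def piHom : TopCat.of I01 ⟶ TopCat.of V :=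
  TopCat.ofHom ⟨pi1, pi1_continuous⟩

/-- The unique morphism from the empty space to `X`, as a morphism of `TopCat`. -/
def emptyTo (X : Type) [TopologicalSpace X] : TopCat.of Empty ⟶ TopCat.of X :=
  TopCat.ofHom ⟨Empty.elim, by continuity⟩

/-!
A continuous map `g : X → V` is the same as a pair of disjoint closed sets `g⁻¹ L`, `g⁻¹ R`.
Since `z ↦ (ι z, π z)` embeds `I₀¹` into `[0,1] × V`, a lift of `g` through `π` is the same as a
continuous `u : X → [0,1]` with `u = 0` on `g⁻¹ L` and `u = 1` on `g⁻¹ R`. The source of `∅ → X`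
being initial, the lifting property therefore says that any two disjoint closed sets admit an
Urysohn function, which characterizes normality.
-/

open CategoryTheory Limits Set

lemma CategoryTheory.hasLiftingProperty_iff_of_isInitial {C : Type*} [Category C]
    {A B Y Z : C} {i : A ⟶ B} (hA : IsInitial A) (p : Y ⟶ Z) :
    HasLiftingProperty i p ↔ ∀ g : B ⟶ Z, ∃ l : B ⟶ Y, l ≫ p = g := by
  refine ⟨fun h g => ?_, fun h => ⟨fun {f g} _ => ?_⟩⟩
  · have sq : CommSq (hA.to Y) i p g := ⟨hA.hom_ext _ _⟩
    exact ⟨sq.lift, sq.fac_right⟩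
  · obtain ⟨l, hl⟩ := h g
    exact ⟨⟨⟨l, hA.hom_ext _ _, hl⟩⟩⟩

universe u

namespace TopCat

def isInitialEmpty : IsInitial (TopCat.of Empty) :=
  IsInitial.ofUniqueHom (fun Y => ofHom ⟨Empty.elim, continuous_of_discreteTopology⟩)
    fun _ _ => by ext ⟨⟩

lemma forall_exists_comp_ofHom_iff {X Y Z : Type u} [TopologicalSpace X] [TopologicalSpace Y]
    [TopologicalSpace Z] (p : C(Y, Z)) :
    (∀ g : of X ⟶ of Z, ∃ l : of X ⟶ of Y, l ≫ ofHom p = g) ↔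
      ∀ g : C(X, Z), ∃ l : C(X, Y), ⇑p ∘ ⇑l = ⇑g := by
  refine ⟨fun h g => ?_, fun h g => ?_⟩
  · obtain ⟨l, hl⟩ := h (ofHom g)
    exact ⟨l.hom, congrArg (fun φ : of X ⟶ of Z => ⇑φ.hom) hl⟩
  · obtain ⟨l, hl⟩ := h g.hom
    exact ⟨ofHom l, by ext x; exact congrFun hl x⟩

end TopCat

namespace V

lemma isClosed_singleton_L : IsClosed {L} := by
  rw [← isOpen_compl_iff]
  exact ⟨fun h => absurd rfl h, fun _ h => V.noConfusion h⟩

lemma isClosed_singleton_R : IsClosed {R} := by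
  rw [← isOpen_compl_iff]
  exact ⟨fun _ h => V.noConfusion h, fun h => absurd rfl h⟩

lemma continuous_iff {X : Type*} [TopologicalSpace X] {g : X → V} :
    Continuous g ↔ IsClosed (g ⁻¹' {L}) ∧ IsClosed (g ⁻¹' {R}) := by
  refine ⟨fun hg => ⟨isClosed_singleton_L.preimage hg, isClosed_singleton_R.preimage hg⟩,
    fun ⟨hL, hR⟩ => continuous_def.2 fun U hU => ?_⟩
  by_cases hc : c ∈ U
  · have hUc : Uᶜ ⊆ {L, R} := by
      rintro (_ | _ | _) hv <;> simp_all
    rw [← isClosed_compl_iff, ← preimage_compl, ← biUnion_preimage_singleton]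
    refine ((toFinite _).subset hUc).isClosed_biUnion fun v hv => ?_
    rcases hUc hv with rfl | rfl <;> assumption
  · have : U = ∅ := by
      ext (_ | _ | _) <;> simp only [mem_empty_iff_false, iff_false] <;>
        first | exact hc | exact fun h => hc (hU.1 h) | exact fun h => hc (hU.2 h)
    simp [this]

open Classical in
noncomputable def ofSets {X : Type*} (s t : Set X) (x : X) : V :=
  if x ∈ s then L else if x ∈ t then R else c

section ofSets

variable {X : Type*} {s t : Set X}

lemma ofSets_preimage_L : ofSets s t ⁻¹' {L} = s := by
  ext x
  by_cases hs : x ∈ s <;> by_cases ht : x ∈ t <;> simp [ofSets, hs, ht]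

lemma ofSets_preimage_R (hd : Disjoint s t) : ofSets s t ⁻¹' {R} = t := by
  ext x
  by_cases hs : x ∈ s <;> by_cases ht : x ∈ t <;> simp [ofSets, hs, ht]
  exact disjoint_left.1 hd hs ht

end ofSets

lemma forall_continuousMap_iff {X : Type*} [TopologicalSpace X] {P : Set X → Set X → Prop} :
    (∀ g : C(X, V), P (g ⁻¹' {L}) (g ⁻¹' {R})) ↔
      ∀ s t : Set X, IsClosed s → IsClosed t → Disjoint s t → P s t := by
  refine ⟨fun h s t hs ht hd => ?_, fun h g => ?_⟩
  · have hcont : Continuous (ofSets s t) := by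
      rw [continuous_iff, ofSets_preimage_L, ofSets_preimage_R hd]
      exact ⟨hs, ht⟩
    simpa only [ContinuousMap.coe_mk, ofSets_preimage_L, ofSets_preimage_R hd] using h ⟨_, hcont⟩
  · obtain ⟨hL, hR⟩ := continuous_iff.1 g.continuous
    exact h _ _ hL hR <| (disjoint_singleton.2 fun h => V.noConfusion h).preimage g

end V

namespace I01

def mk (t : I) : V → I01
  | V.L => Sum.inr false
  | V.c => Sum.inl t
  | V.R => Sum.inr true

lemma pi1_mk (t : I) (v : V) : pi1 (mk t v) = v := by
  cases v <;> rfl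

lemma iota_mk {t : I} {v : V} (hL : v = V.L → t = 0) (hR : v = V.R → t = 1) :
    iota (mk t v) = t := by
  cases v
  · exact (hL rfl).symm
  · rfl
  · exact (hR rfl).symm

lemma iota_eq_zero_of_pi1_eq_L {z : I01} (h : pi1 z = V.L) : iota z = 0 := by
  rcases z with _ | _ | _ <;> first | rfl | exact V.noConfusion h

lemma iota_eq_one_of_pi1_eq_R {z : I01} (h : pi1 z = V.R) : iota z = 1 := by
  rcases z with _ | _ | _ <;> first | rfl | exact V.noConfusion h

lemma continuous_iota : Continuous iota :=
  continuous_def.2 fun _ hU => ⟨hU, id, id⟩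

lemma isInducing_iota_pi1 : Topology.IsInducing fun z => (iota z, pi1 z) := by
  refine ⟨le_antisymm (continuous_iff_le_induced.1 (continuous_iota.prodMk pi1_continuous))
    fun U hU => ?_⟩
  let S : Set V := {v | (v = V.L → Sum.inr false ∈ U) ∧ (v = V.R → Sum.inr true ∈ U)}
  have hS : IsOpen S := ⟨fun _ => ⟨fun h => V.noConfusion h, fun h => V.noConfusion h⟩,
    fun _ => ⟨fun h => V.noConfusion h, fun h => V.noConfusion h⟩⟩
  refine isOpen_induced_iff.2 ⟨(Sum.inl ⁻¹' U) ×ˢ S, hU.1.prod hS, ?_⟩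
  ext (x | _ | _)
  · exact ⟨fun h => h.1, fun h => ⟨h, fun h => V.noConfusion h, fun h => V.noConfusion h⟩⟩
  · exact ⟨fun h => h.2.1 rfl, fun h => ⟨hU.2.1 h, fun _ => h, fun h => V.noConfusion h⟩⟩
  · exact ⟨fun h => h.2.2 rfl, fun h => ⟨hU.2.2 h, fun h => V.noConfusion h, fun _ => h⟩⟩

end I01

lemma exists_lift_along_pi1_iff {X : Type*} [TopologicalSpace X] (g : C(X, V)) :
    (∃ l : C(X, I01), pi1 ∘ l = g) ↔
      ∃ u : C(X, I), EqOn u 0 (g ⁻¹' {V.L}) ∧ EqOn u 1 (g ⁻¹' {V.R}) := by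
  constructor
  · rintro ⟨l, hl⟩
    refine ⟨⟨iota ∘ l, I01.continuous_iota.comp l.continuous⟩, fun x hx => ?_, fun x hx => ?_⟩
    · exact I01.iota_eq_zero_of_pi1_eq_L ((congrFun hl x).trans hx)
    · exact I01.iota_eq_one_of_pi1_eq_R ((congrFun hl x).trans hx)
  · rintro ⟨u, hu0, hu1⟩
    have hmk : ∀ x, (iota (I01.mk (u x) (g x)), pi1 (I01.mk (u x) (g x))) = (u x, g x) :=
      fun x => Prod.ext (I01.iota_mk (fun h => hu0 h) fun h => hu1 h) (I01.pi1_mk _ _)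
    have hcont : Continuous fun x => I01.mk (u x) (g x) := by
      rw [I01.isInducing_iota_pi1.continuous_iff]
      simpa only [Function.comp_def, hmk] using u.continuous.prodMk g.continuous
    exact ⟨⟨_, hcont⟩, funext fun x => I01.pi1_mk _ _⟩

lemma normalSpace_iff_exists_continuous_zero_one {X : Type*} [TopologicalSpace X] :
    NormalSpace X ↔ ∀ s t : Set X, IsClosed s → IsClosed t → Disjoint s t →
      ∃ u : C(X, I), EqOn u 0 s ∧ EqOn u 1 t := by
  refine ⟨fun _ s t hs ht hd => ?_, fun h => ⟨fun s t hs ht hd => ?_⟩⟩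
  · obtain ⟨f, hf0, hf1, hf⟩ := exists_continuous_zero_one_of_isClosed hs ht hd
    exact ⟨⟨fun x => ⟨f x, hf x⟩, f.continuous.subtype_mk _⟩,
      fun x hx => Subtype.ext (hf0 hx), fun x hx => Subtype.ext (hf1 hx)⟩
  · obtain ⟨u, hu0, hu1⟩ := h s t hs ht hd
    have h01 : SeparatedNhds ({0} : Set I) {1} :=
      .of_finite (finite_singleton _) (finite_singleton _) (disjoint_singleton.2 zero_ne_one)
    exact (h01.preimage u.continuous).mono (fun x hx => hu0 hx) fun x hx => hu1 hx

/-- `X` is normal iff `∅ → X` has the left lifting property against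
`π : I₀¹ → V` in `TopCat`. -/
theorem normal_iff_hasLiftingProperty (X : Type) [TopologicalSpace X] :
    NormalSpace X ↔ CategoryTheory.HasLiftingProperty (emptyTo X) piHom := by
  rw [hasLiftingProperty_iff_of_isInitial TopCat.isInitialEmpty, piHom,
    TopCat.forall_exists_comp_ofHom_iff, normalSpace_iff_exists_continuous_zero_one,
    ← V.forall_continuousMap_iff]
  exact forall_congr' fun g => (exists_lift_along_pi1_iff g).symm
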